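/- Let (L, ∘_λ, [·_λ ·]) be a transposed Poisson conformal superalgebra. Then for all homogeneous h, x, y, z ∈ L the following identity holds: (−1)^{|x||z|} [(h ∘_λ x)_{λ+γ} [y_{μ−γ} z]] + (−1)^{|x||y|} [(h ∘_λ y)_{λ+μ−γ} [z_{−∂−γ} x]] + (−1)^{|y||z|} [(h ∘_λ z)_{−∂−μ} [x_γ y]] = 0. -/

import Mathlib

/-!
Write `D = h ∘_λ ·`. Two applications of the transposed Leibniz rule expand `4 D[x_γ [y_δ z]]`
into brackets in which exactly one of `x, y, z` carries `D`. Apply `D` to the Jacobi identity for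
`x, y, z`, expand every term in this way and use Jacobi once more on the brackets containing
`Dx`, `Dy` or `Dz`: what survives is
`[(Dx)_{λ+γ} [y_{μ-γ} z]] = ± [(Dy)_{λ+μ-γ} [x_γ z]] ± [[x_γ y]_μ (Dz)]`,
and skew-symmetry turns the two `-∂-·` brackets of the claim into those on the right.
-/

open Polynomial
open scoped TensorProduct

noncomputable section

namespace TPCSAFormal

/-- The super-sign `(-1)^{i·j}` for parities `i, j ∈ ℤ/2ℤ`. -/
def sgn (i j : ZMod 2) : ℂ := (-1 : ℂ) ^ (i.val * j.val)

variable (L : Type*) [AddCommGroup L] [Module ℂ L]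
  [Module (Polynomial ℂ) L] [IsScalarTower ℂ (Polynomial ℂ) L]

/-- A conformal `λ`-product on the `ℂ[∂]`-module `L`, recorded by its family of `n`-th
product coefficients: `a ∘_λ b = ∑_n λ^n • coeff n a b`, with finitely many nonzero terms.
This is exactly the data of a `ℂ`-bilinear map `L ⊗ L → ℂ[λ] ⊗ L`. -/
structure ConformalProduct where
  coeff : ℕ → L →ₗ[ℂ] L →ₗ[ℂ] L
  coeff_finite : ∀ a b : L, ∃ N : ℕ, ∀ n : ℕ, N ≤ n → coeff n a b = 0

variable {L}

/-- The value `a ∘_λ b` of the `λ`-product at `λ ∈ ℂ`.  Since `ℂ` is infinite, identities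
between such values for all `λ` are equivalent to the corresponding polynomial identities. -/
def ConformalProduct.mul (m : ConformalProduct L) (lam : ℂ) (a b : L) : L :=
  ∑ᶠ n : ℕ, lam ^ n • m.coeff n a b

/-- The value `a ∘_{-∂-λ} b`, where `∂` acts on `L` as scalar multiplication by
`X ∈ ℂ[∂]` (the variable `λ` being replaced by the operator `-∂-λ`). -/
def ConformalProduct.cmul (m : ConformalProduct L) (lam : ℂ) (a b : L) : L :=
  ∑ᶠ n : ℕ, ((-((X : Polynomial ℂ) + C lam)) ^ n) • m.coeff n a b

variable (L) in
/-- A `ℤ₂`-grading on `L` making it a `ℤ₂`-graded `ℂ[∂]`-module: `L = L₀ ⊕ L₁` with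
`∂ L_i ⊆ L_i`, where `∂` acts as multiplication by `X ∈ ℂ[∂]`. -/
structure SuperModule where
  grade : ZMod 2 → Submodule ℂ L
  isInternal : DirectSum.IsInternal grade
  X_smul_mem : ∀ (i : ZMod 2) (a : L), a ∈ grade i → (X : Polynomial ℂ) • a ∈ grade i

/-- `m` is an even `λ`-product on the `ℤ₂`-graded `ℂ[∂]`-module `(L, S)`:
it is even with respect to the grading and conformally sesquilinear. -/
structure IsLambdaProduct (S : SuperModule L) (m : ConformalProduct L) : Prop where
  even : ∀ (i j : ZMod 2) (a b : L), a ∈ S.grade i → b ∈ S.grade j →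
    ∀ n : ℕ, m.coeff n a b ∈ S.grade (i + j)
  sesq_left : ∀ (lam : ℂ) (a b : L),
    m.mul lam ((X : Polynomial ℂ) • a) b = (-lam) • m.mul lam a b
  sesq_right : ∀ (lam : ℂ) (a b : L),
    m.mul lam a ((X : Polynomial ℂ) • b) =
      (X : Polynomial ℂ) • m.mul lam a b + lam • m.mul lam a b

/-- `(L, S, m)` is a commutative associative conformal superalgebra. -/
structure IsCommAssoc (S : SuperModule L) (m : ConformalProduct L)
    extends IsLambdaProduct S m : Prop where
  comm : ∀ (i j : ZMod 2) (a b : L), a ∈ S.grade i → b ∈ S.grade j →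
    ∀ lam : ℂ, m.mul lam a b = sgn i j • m.cmul lam b a
  assoc : ∀ (lam mu : ℂ) (a b c : L),
    m.mul lam a (m.mul mu b c) = m.mul (lam + mu) (m.mul lam a b) c

/-- `(L, S, br)` is a Lie conformal superalgebra. -/
structure IsLie (S : SuperModule L) (br : ConformalProduct L)
    extends IsLambdaProduct S br : Prop where
  skew : ∀ (i j : ZMod 2) (a b : L), a ∈ S.grade i → b ∈ S.grade j →
    ∀ lam : ℂ, br.mul lam a b = -(sgn i j • br.cmul lam b a)
  jacobi : ∀ (i j : ZMod 2) (a b : L), a ∈ S.grade i → b ∈ S.grade j →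
    ∀ (c : L) (lam mu : ℂ),
      br.mul lam a (br.mul mu b c) =
        br.mul (lam + mu) (br.mul lam a b) c + sgn i j • br.mul mu b (br.mul lam a c)

/-- `(L, S, m, br)` is a transposed Poisson conformal superalgebra. -/
structure IsTPCSA (S : SuperModule L) (m br : ConformalProduct L) : Prop where
  commAssoc : IsCommAssoc S m
  lie : IsLie S br
  transposedLeibniz : ∀ (i j : ZMod 2) (a b : L), a ∈ S.grade i → b ∈ S.grade j →
    ∀ (c : L) (lam mu : ℂ),
      (2 : ℂ) • m.mul lam a (br.mul mu b c) =
        br.mul (lam + mu) (m.mul lam a b) c + sgn i j • br.mul mu b (m.mul lam a c)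

/-- `(L, S, m, br)` is a Poisson conformal superalgebra. -/
structure IsPCSA (S : SuperModule L) (m br : ConformalProduct L) : Prop where
  commAssoc : IsCommAssoc S m
  lie : IsLie S br
  leibniz : ∀ (i j : ZMod 2) (a b : L), a ∈ S.grade i → b ∈ S.grade j →
    ∀ (c : L) (lam mu : ℂ),
      br.mul lam a (m.mul mu b c) =
        m.mul (lam + mu) (br.mul lam a b) c + sgn i j • m.mul mu b (br.mul lam a c)

/-- `(L, S, br, α)` is a Hom-Lie conformal superalgebra. -/
structure IsHomLie (S : SuperModule L) (br : ConformalProduct L) (α : L → L)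
    extends IsLambdaProduct S br : Prop where
  map_smul_add : ∀ (c : ℂ) (a b : L), α (c • a + b) = c • α a + α b
  map_grade : ∀ (i : ZMod 2) (a : L), a ∈ S.grade i → α a ∈ S.grade i
  commute_partial : ∀ a : L, α ((X : Polynomial ℂ) • a) = (X : Polynomial ℂ) • α a
  skew : ∀ (i j : ZMod 2) (a b : L), a ∈ S.grade i → b ∈ S.grade j →
    ∀ lam : ℂ, br.mul lam a b = -(sgn i j • br.cmul lam b a)
  homJacobi : ∀ (i j : ZMod 2) (a b : L), a ∈ S.grade i → b ∈ S.grade j →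
    ∀ (c : L) (lam mu : ℂ),
      br.mul lam (α a) (br.mul mu b c) =
        br.mul (lam + mu) (br.mul lam a b) (α c) + sgn i j • br.mul mu (α b) (br.mul lam a c)

/-- `(L, S, p)` is a left-symmetric conformal superalgebra. -/
structure IsLeftSymmetric (S : SuperModule L) (p : ConformalProduct L)
    extends IsLambdaProduct S p : Prop where
  leftSym : ∀ (i j : ZMod 2) (a b : L), a ∈ S.grade i → b ∈ S.grade j →
    ∀ (c : L) (lam mu : ℂ),
      p.mul (lam + mu) (p.mul lam a b) c - p.mul lam a (p.mul mu b c) =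
        sgn i j • (p.mul (lam + mu) (p.mul mu b a) c - p.mul mu b (p.mul lam a c))

/-- `(L, S, p)` is a (left) Novikov conformal superalgebra. -/
structure IsNovikov (S : SuperModule L) (p : ConformalProduct L)
    extends IsLeftSymmetric S p : Prop where
  novikov : ∀ (j k : ZMod 2) (b c : L), b ∈ S.grade j → c ∈ S.grade k →
    ∀ (a : L) (lam mu : ℂ),
      p.mul (lam + mu) (p.mul lam a b) c = sgn j k • p.cmul mu (p.mul lam a c) b

/-- `(L, S, mc, p)` is a Novikov-Poisson conformal superalgebra. -/
structure IsNovikovPoisson (S : SuperModule L) (mc p : ConformalProduct L) : Prop where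
  commAssoc : IsCommAssoc S mc
  novikov : IsNovikov S p
  compat₁ : ∀ (lam mu : ℂ) (a b c : L),
    p.mul (lam + mu) (mc.mul lam a b) c = mc.mul lam a (p.mul mu b c)
  compat₂ : ∀ (i j : ZMod 2) (a b : L), a ∈ S.grade i → b ∈ S.grade j →
    ∀ (c : L) (lam mu : ℂ),
      mc.mul (lam + mu) (p.mul lam a b) c - p.mul lam a (mc.mul mu b c) =
        sgn i j • (mc.mul (lam + mu) (p.mul mu b a) c - p.mul mu b (mc.mul lam a c))

/-- `(L, S, mc, p)` is a pre-Lie commutative conformal superalgebra. -/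
structure IsPreLieComm (S : SuperModule L) (mc p : ConformalProduct L) : Prop where
  commAssoc : IsCommAssoc S mc
  leftSymmetric : IsLeftSymmetric S p
  compat : ∀ (i j : ZMod 2) (a b : L), a ∈ S.grade i → b ∈ S.grade j →
    ∀ (c : L) (lam mu : ℂ),
      p.mul lam a (mc.mul mu b c) =
        mc.mul (lam + mu) (p.mul lam a b) c + sgn i j • mc.mul mu b (p.mul lam a c)

/-- `(L, S, mc, p)` is a pre-Lie Poisson conformal superalgebra. -/
structure IsPreLiePoisson (S : SuperModule L) (mc p : ConformalProduct L) : Prop where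
  commAssoc : IsCommAssoc S mc
  leftSymmetric : IsLeftSymmetric S p
  compat₁ : ∀ (lam mu : ℂ) (a b c : L),
    p.mul (lam + mu) (mc.mul lam a b) c = mc.mul lam a (p.mul mu b c)
  compat₂ : ∀ (i j : ZMod 2) (a b : L), a ∈ S.grade i → b ∈ S.grade j →
    ∀ (c : L) (lam mu : ℂ),
      mc.mul (lam + mu) (p.mul lam a b) c - p.mul lam a (mc.mul mu b c) =
        sgn i j • (mc.mul (lam + mu) (p.mul mu b a) c - p.mul mu b (mc.mul lam a c))


end TPCSAFormal

namespace TPCSAFormal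

variable {L : Type*} [AddCommGroup L] [Module ℂ L]

lemma sgn_mul_self (i j : ZMod 2) : sgn i j * sgn i j = 1 := by
  rw [sgn, ← pow_add]
  exact Even.neg_one_pow ⟨_, rfl⟩

lemma sgn_comm (i j : ZMod 2) : sgn i j = sgn j i := by
  rw [sgn, sgn, mul_comm]

lemma sgn_add_left (i j k : ZMod 2) : sgn (i + j) k = sgn i k * sgn j k := by
  simp only [sgn, ZMod.val_add, ← pow_add, ← add_mul]
  rw [neg_one_pow_eq_pow_mod_two, Nat.mod_mul_mod, ← neg_one_pow_eq_pow_mod_two]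

lemma sgn_add_right (i j k : ZMod 2) : sgn i (j + k) = sgn i j * sgn i k := by
  rw [sgn_comm, sgn_add_left, sgn_comm j, sgn_comm k]

namespace ConformalProduct

variable (m : ConformalProduct L)

lemma hasFiniteSupport_smul_coeff (c : ℕ → ℂ) (a b : L) :
    (fun n => c n • m.coeff n a b).HasFiniteSupport := by
  obtain ⟨N, hN⟩ := m.coeff_finite a b
  refine (Set.finite_Iio N).subset fun n hn => ?_
  by_contra hnN
  exact hn (show c n • _ = 0 by rw [hN n (not_lt.mp hnN), smul_zero])

lemma mul_add_left (lam : ℂ) (a b c : L) :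
    m.mul lam (a + b) c = m.mul lam a c + m.mul lam b c := by
  simp only [mul, map_add, LinearMap.add_apply, smul_add]
  exact finsum_add_distrib (m.hasFiniteSupport_smul_coeff _ a c)
    (m.hasFiniteSupport_smul_coeff _ b c)

lemma mul_add_right (lam : ℂ) (a b c : L) :
    m.mul lam a (b + c) = m.mul lam a b + m.mul lam a c := by
  simp only [mul, map_add, smul_add]
  exact finsum_add_distrib (m.hasFiniteSupport_smul_coeff _ a b)
    (m.hasFiniteSupport_smul_coeff _ a c)

lemma mul_smul_left (lam r : ℂ) (a b : L) : m.mul lam (r • a) b = r • m.mul lam a b := by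
  simp only [mul, map_smul, LinearMap.smul_apply, smul_comm _ r]
  exact (smul_finsum' r (m.hasFiniteSupport_smul_coeff _ a b)).symm

lemma mul_smul_right (lam r : ℂ) (a b : L) : m.mul lam a (r • b) = r • m.mul lam a b := by
  simp only [mul, map_smul, smul_comm _ r]
  exact (smul_finsum' r (m.hasFiniteSupport_smul_coeff _ a b)).symm

end ConformalProduct

section Graded

variable [Module (Polynomial ℂ) L] {S : SuperModule L} {m br : ConformalProduct L}

lemma IsLambdaProduct.mul_mem
    (hm : IsLambdaProduct S m) {i j : ZMod 2} {a b : L} (ha : a ∈ S.grade i)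
    (hb : b ∈ S.grade j) (lam : ℂ) : m.mul lam a b ∈ S.grade (i + j) :=
  finsum_induction (· ∈ S.grade (i + j)) (zero_mem _) (fun _ _ => add_mem)
    fun n => Submodule.smul_mem _ _ (hm.even i j a b ha hb n)

lemma IsLie.cmul_eq_neg_sgn_smul (hbr : IsLie S br) {i j : ZMod 2} {a b : L} (ha : a ∈ S.grade i)
    (hb : b ∈ S.grade j) (lam : ℂ) : br.cmul lam b a = (-sgn i j) • br.mul lam a b := by
  rw [hbr.skew i j a b ha hb, smul_neg, smul_smul, neg_mul, sgn_mul_self, neg_smul, one_smul,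
    neg_neg]

namespace IsTPCSA

variable {l i j : ZMod 2} {h x y : L}

lemma four_smul_mul_br_br (hT : IsTPCSA S m br) (hh : h ∈ S.grade l) (hx : x ∈ S.grade i)
    (hy : y ∈ S.grade j) (z : L) (lam gam del : ℂ) :
    (4 : ℂ) • m.mul lam h (br.mul gam x (br.mul del y z)) =
      (2 : ℂ) • br.mul (lam + gam) (m.mul lam h x) (br.mul del y z)
        + sgn l i • br.mul gam x (br.mul (lam + del) (m.mul lam h y) z)
        + (sgn l i * sgn l j) • br.mul gam x (br.mul del y (m.mul lam h z)) := by
  have outer := hT.transposedLeibniz l i h x hh hx (br.mul del y z) lam gam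
  have inner := congrArg (br.mul gam x) (hT.transposedLeibniz l j h y hh hy z lam del)
  simp only [ConformalProduct.mul_add_right, ConformalProduct.mul_smul_right] at inner
  linear_combination (norm := module) (2 : ℂ) • outer + sgn l i • inner

lemma four_smul_mul_br_br_left (hT : IsTPCSA S m br) (hh : h ∈ S.grade l) (hx : x ∈ S.grade i)
    (hy : y ∈ S.grade j) (z : L) (lam gam mu : ℂ) :
    (4 : ℂ) • m.mul lam h (br.mul mu (br.mul gam x y) z) =
      br.mul (lam + mu) (br.mul (lam + gam) (m.mul lam h x) y) z
        + sgn l i • br.mul (lam + mu) (br.mul gam x (m.mul lam h y)) z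
        + (2 * (sgn l i * sgn l j)) • br.mul mu (br.mul gam x y) (m.mul lam h z) := by
  have outer := hT.transposedLeibniz l (i + j) h (br.mul gam x y) hh
    (hT.lie.mul_mem hx hy gam) z lam mu
  rw [sgn_add_right] at outer
  have inner := congrArg (br.mul (lam + mu) · z) (hT.transposedLeibniz l i h x hh hx y lam gam)
  simp only [ConformalProduct.mul_add_left, ConformalProduct.mul_smul_left] at inner
  linear_combination (norm := module) (2 : ℂ) • outer + inner

lemma br_mul_br (hT : IsTPCSA S m br) (hh : h ∈ S.grade l) (hx : x ∈ S.grade i)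
    (hy : y ∈ S.grade j) (z : L) (lam gam mu : ℂ) :
    br.mul (lam + gam) (m.mul lam h x) (br.mul (mu - gam) y z) =
      sgn i j • br.mul (lam + mu - gam) (m.mul lam h y) (br.mul gam x z)
        + (sgn l i * sgn l j) • br.mul mu (br.mul gam x y) (m.mul lam h z) := by
  have jac := congrArg (m.mul lam h) (hT.lie.jacobi i j x y hx hy z gam (mu - gam))
  simp only [ConformalProduct.mul_add_right, ConformalProduct.mul_smul_right,
    add_sub_cancel] at jac
  have ex := hT.four_smul_mul_br_br hh hx hy z lam gam (mu - gam)
  have ey := hT.four_smul_mul_br_br hh hy hx z lam (mu - gam) gam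
  have exy := hT.four_smul_mul_br_br_left hh hx hy z lam gam mu
  have jx := hT.lie.jacobi (l + i) j _ y (hT.commAssoc.mul_mem hh hx lam) hy z
    (lam + gam) (mu - gam)
  have jy := hT.lie.jacobi i (l + j) x _ hx (hT.commAssoc.mul_mem hh hy lam) z
    gam (lam + (mu - gam))
  have jz := hT.lie.jacobi i j x y hx hy (m.mul lam h z) gam (mu - gam)
  rw [← add_sub_assoc] at ex ey jy
  rw [add_add_sub_cancel, sgn_add_left] at jx
  rw [show gam + (lam + mu - gam) = lam + mu by ring, sgn_add_right, sgn_comm i l] at jy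
  rw [add_sub_cancel] at jz
  -- `sgn l i • jy` leaves `sgn l i ^ 2` on the `[(Dy) [x z]]` term
  linear_combination (norm := module)
    (4 : ℂ) • jac - ex + exy + sgn i j • ey - jx - sgn l i • jy - (sgn l i * sgn l j) • jz
    - (sgn_mul_self l i) • (sgn i j • br.mul (lam + mu - gam) (m.mul lam h y) (br.mul gam x z))

end IsTPCSA

end Graded

variable [Module (Polynomial ℂ) L] [IsScalarTower ℂ (Polynomial ℂ) L]

/-- the identity (3.17) in a transposed Poisson conformal superalgebra. -/
theorem statement_3 (S : SuperModule L) (m br : ConformalProduct L)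
    (hT : IsTPCSA S m br) (l i j k : ZMod 2) (h x y z : L)
    (hh : h ∈ S.grade l) (hx : x ∈ S.grade i) (hy : y ∈ S.grade j) (hz : z ∈ S.grade k)
    (lam mu gam : ℂ) :
    sgn i k • br.mul (lam + gam) (m.mul lam h x) (br.mul (mu - gam) y z)
      + sgn i j • br.mul (lam + mu - gam) (m.mul lam h y) (br.cmul gam z x)
      + sgn j k • br.cmul mu (m.mul lam h z) (br.mul gam x y) = 0 := by
  have hsign : sgn j k * sgn (i + j) (l + k) = sgn i k * (sgn l i * sgn l j) := by
    rw [sgn_add_left, sgn_add_right, sgn_add_right, sgn_comm i l, sgn_comm j l]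
    linear_combination (sgn l i * sgn i k * sgn l j) * sgn_mul_self j k
  rw [hT.lie.cmul_eq_neg_sgn_smul hx hz,
    hT.lie.cmul_eq_neg_sgn_smul (hT.lie.mul_mem hx hy gam) (hT.commAssoc.mul_mem hh hz lam),
    ConformalProduct.mul_smul_right, hT.br_mul_br hh hx hy z lam gam mu]
  linear_combination (norm := module) (-hsign) • br.mul mu (br.mul gam x y) (m.mul lam h z)

end TPCSAFormal
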